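/- arXiv:2501.08149 — 4 statements merged into one kernel-verified Lean document; each statement's English description precedes it below -/
import Mathlib

section
/- Let M ≥ M' ≥ 1 be integers, N ≥ 1 an integer, and let δ, E be real numbers with 0 < δ < E. Let n_{a_1}, …, n_{a_{M'}} be positive integers and set A = Σ_{j=1}^{M'} n_{a_j} and C = M·N·δ/(E − δ). For j = 1, …, M', define β^{(j)} = (M·n_{a_j} + C)/(A + C). Let d_1, …, d_M be positive reals with d = Σ_{j=1}^{M} d_j. Then Σ_{j=1}^{M'} β^{(j)}·(E − δ) ≥ Σ_{j=1}^{M'} (d_j/d)·(E − δ); that is, the difference in average anomaly score between anomalies and normal samples for MIVAE, Δs_MIVAE = Σ_{j=1}^{M'} β^{(j)}(E − δ), is at least the corresponding difference for VAEAD, Δs_VAEAD = Σ_{j=1}^{M'} (d_j/d)(E − δ). -/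
/-- Theorem 1 (MIVAE paper): the difference in average anomaly score between
anomalies and normal samples for MIVAE, `Δs_MIVAE = Σ_{j<M'} β_j (E - δ)`, is at
least the corresponding difference `Δs_VAEAD = Σ_{j<M'} (d_j/d)(E - δ)` for VAEAD. -/
theorem mivae_delta_ge_vaead_delta
    (M M' N : ℕ) (hM'M : M' ≤ M) (hM' : 1 ≤ M') (hN : 1 ≤ N)
    (δ E : ℝ) (hδ : 0 < δ) (hδE : δ < E)
    (na : Fin M' → ℕ) (hna : ∀ j, 0 < na j)
    (A : ℝ) (hA : A = ∑ j, (na j : ℝ))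
    (C : ℝ) (hC : C = (M : ℝ) * (N : ℝ) * δ / (E - δ))
    (β : Fin M' → ℝ) (hβ : ∀ j, β j = ((M : ℝ) * (na j : ℝ) + C) / (A + C))
    (d : Fin M → ℝ) (hd : ∀ j, 0 < d j)
    (D : ℝ) (hD : D = ∑ j, d j) :
    ∑ j, β j * (E - δ) ≥ ∑ j : Fin M', (d (Fin.castLE hM'M j) / D) * (E - δ) := by
  have hEδ : (0:ℝ) < E - δ := by linarith
  have hApos : 0 < A := by
    rw [hA]
    apply Finset.sum_pos (fun j _ => by exact_mod_cast hna j)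
    have := Fin.pos_iff_nonempty.mp hM'; exact Finset.univ_nonempty
  have hCnn : 0 ≤ C := by
    rw [hC]
    positivity
  have hAC : 0 < A + C := by linarith
  have hDpos : 0 < D := by
    rw [hD]
    apply Finset.sum_pos (fun j _ => hd j)
    have := Fin.pos_iff_nonempty.mp (lt_of_lt_of_le hM' hM'M); exact Finset.univ_nonempty
  -- Σ d_j/D over first M' ≤ 1
  have h2 : ∑ j : Fin M', (d (Fin.castLE hM'M j) / D) ≤ 1 := by
    rw [← Finset.sum_div, div_le_one hDpos, hD]
    have hinj : Function.Injective (Fin.castLE hM'M) := Fin.castLE_injective hM'M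
    calc ∑ j : Fin M', d (Fin.castLE hM'M j)
        = ∑ j ∈ Finset.univ.image (Fin.castLE hM'M), d j := by
          rw [Finset.sum_image (fun a _ b _ h => hinj h)]
      _ ≤ ∑ j, d j := Finset.sum_le_sum_of_subset_of_nonneg (Finset.subset_univ _)
          (fun j _ _ => (hd j).le)
  -- Σ β_j ≥ 1
  have h1 : (1:ℝ) ≤ ∑ j, β j := by
    have hsum : ∑ j, β j = ((M:ℝ) * A + (M':ℝ) * C) / (A + C) := by
      simp only [hβ]
      rw [← Finset.sum_div, Finset.sum_add_distrib, ← Finset.mul_sum, ← hA,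
        Finset.sum_const, Finset.card_univ, Fintype.card_fin, nsmul_eq_mul]
    rw [hsum, le_div_iff₀ hAC, one_mul]
    have hM1 : (1:ℝ) ≤ (M:ℝ) := by exact_mod_cast le_trans hM' hM'M
    have hM'1 : (1:ℝ) ≤ (M':ℝ) := by exact_mod_cast hM'
    nlinarith
  rw [← Finset.sum_mul, ← Finset.sum_mul]
  exact mul_le_mul_of_nonneg_right (le_trans h2 h1) hEδ.le
end

section
/- Let M ≥ M' ≥ 1 be integers, N ≥ 1 an integer, and let δ, E be real numbers with 0 < δ < E. Let n_{a_1}, …, n_{a_{M'}} be positive integers and set A = Σ_{j=1}^{M'} n_{a_j} and C = M·N·δ/(E − δ). For j = 1, …, M', define β^{(j)} = (M·n_{a_j} + C)/(A + C). Let d_1, …, d_M be positive reals with d = Σ_{j=1}^{M} d_j. Then Σ_{j=1}^{M'} β^{(j)} ≥ Σ_{j=1}^{M'} d_j/d. -/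
/-- Lemma 3 (MIVAE paper): `Σ_{j<M'} β_j ≥ Σ_{j<M'} d_j / d`. -/
theorem sum_beta_ge_sum_dim_ratio
    (M M' N : ℕ) (hM'M : M' ≤ M) (hM' : 1 ≤ M') (hN : 1 ≤ N)
    (δ E : ℝ) (hδ : 0 < δ) (hδE : δ < E)
    (na : Fin M' → ℕ) (hna : ∀ j, 0 < na j)
    (A : ℝ) (hA : A = ∑ j, (na j : ℝ))
    (C : ℝ) (hC : C = (M : ℝ) * (N : ℝ) * δ / (E - δ))
    (β : Fin M' → ℝ) (hβ : ∀ j, β j = ((M : ℝ) * (na j : ℝ) + C) / (A + C))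
    (d : Fin M → ℝ) (hd : ∀ j, 0 < d j)
    (D : ℝ) (hD : D = ∑ j, d j) :
    ∑ j, β j ≥ ∑ j : Fin M', d (Fin.castLE hM'M j) / D := by
  have hM1 : (1 : ℝ) ≤ (M : ℝ) := by
    exact_mod_cast Nat.one_le_iff_ne_zero.mpr (by omega)
  have hCpos : 0 < C := by
    rw [hC]
    apply div_pos _ (by linarith)
    apply mul_pos _ hδ
    apply mul_pos <;> [skip; exact_mod_cast hN] <;>
      exact_mod_cast Nat.lt_of_lt_of_le hM' hM'M
  have hApos : 0 < A := by
    rw [hA]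
    haveI : Nonempty (Fin M') := Fin.pos_iff_nonempty.mp hM'
    exact Finset.sum_pos (fun j _ => by exact_mod_cast hna j) Finset.univ_nonempty
  have hDpos : 0 < D := by
    rw [hD]
    haveI : Nonempty (Fin M) := Fin.pos_iff_nonempty.mp (by omega)
    exact Finset.sum_pos (fun j _ => hd j) Finset.univ_nonempty
  -- RHS ≤ 1
  have hsub : ∑ j : Fin M', d (Fin.castLE hM'M j) ≤ D := by
    rw [hD]
    have h := Finset.sum_le_sum_of_subset_of_nonneg
      (Finset.subset_univ ((Finset.univ : Finset (Fin M')).map (Fin.castLEEmb hM'M)))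
      (fun i _ _ => (hd i).le)
    rw [Finset.sum_map] at h
    simpa using h
  have hRHS : ∑ j : Fin M', d (Fin.castLE hM'M j) / D ≤ 1 := by
    rw [← Finset.sum_div]
    rw [div_le_one hDpos]
    exact hsub
  -- LHS ≥ 1
  have hLHS : (1 : ℝ) ≤ ∑ j, β j := by
    have : ∑ j, β j = ((M : ℝ) * A + (M' : ℝ) * C) / (A + C) := by
      simp only [hβ]
      rw [← Finset.sum_div, Finset.sum_add_distrib, ← Finset.mul_sum, ← hA]
      simp [mul_comm]
    rw [this, le_div_iff₀ (by linarith)]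
    have h1 : A ≤ (M : ℝ) * A := le_mul_of_one_le_left hApos.le hM1
    have h2 : C ≤ (M' : ℝ) * C := le_mul_of_one_le_left hCpos.le (by exact_mod_cast hM')
    linarith
  linarith
end

section
/- Let M > 1 be an integer, N ≥ 1 an integer, n_a an integer with 1 ≤ n_a ≤ N, and δ, E positive real numbers. Define β = M·(n_a·E + (N − n_a)·δ)/(n_a·E + (M·N − n_a)·δ). Then β > 1 if and only if E > δ. -/
/-- Remark 1 (iff version): `β > 1` if and only if `E > δ`. -/
theorem beta_gt_one_iff
    (M N n_a : ℕ) (hM : 1 < M) (hN : 1 ≤ N) (hna1 : 1 ≤ n_a) (hnaN : n_a ≤ N)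
    (δ E : ℝ) (hδ : 0 < δ) (hE : 0 < E)
    (β : ℝ)
    (hβ : β = (M : ℝ) * ((n_a : ℝ) * E + ((N : ℝ) - (n_a : ℝ)) * δ) /
        ((n_a : ℝ) * E + ((M : ℝ) * (N : ℝ) - (n_a : ℝ)) * δ)) :
    β > 1 ↔ E > δ := by
  have hM' : (1 : ℝ) < (M : ℝ) := by exact_mod_cast hM
  have hna' : (1 : ℝ) ≤ (n_a : ℝ) := by exact_mod_cast hna1
  have hnaN' : (n_a : ℝ) ≤ (N : ℝ) := by exact_mod_cast hnaN
  have hD : 0 < (n_a : ℝ) * E + ((M : ℝ) * (N : ℝ) - (n_a : ℝ)) * δ := by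
    have : (n_a : ℝ) ≤ (M : ℝ) * (N : ℝ) := by nlinarith
    nlinarith
  rw [hβ, gt_iff_lt, lt_div_iff₀ hD]
  constructor
  · intro h
    by_contra hle
    push_neg at hle
    nlinarith [mul_nonneg (mul_nonneg (by linarith : (0:ℝ) ≤ (M:ℝ) - 1)
      (by linarith : (0:ℝ) ≤ (n_a:ℝ))) (by linarith : (0:ℝ) ≤ δ - E)]
  · intro h
    nlinarith [mul_pos (mul_pos (by linarith : (0:ℝ) < (M:ℝ) - 1)
      (by linarith : (0:ℝ) < (n_a:ℝ))) (by linarith : (0:ℝ) < E - δ)]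
end

section
/- Let M ≥ M' ≥ 1 be integers, N ≥ 1 an integer, δ, E real numbers with 0 < δ < E, n_{a_1}, …, n_{a_{M'}} positive integers with A = Σ_{j=1}^{M'} n_{a_j}, C = M·N·δ/(E − δ), and β^{(j)} = (M·n_{a_j} + C)/(A + C). Let d_1, …, d_M be positive reals with d = Σ_{j=1}^{M} d_j. If M > 1 then Σ_{j=1}^{M'} β^{(j)}·(E − δ) − Σ_{j=1}^{M'} (d_j/d)·(E − δ) > 0 whenever M' < M; in general Σ_{j=1}^{M'} β^{(j)} ≥ 1 ≥ Σ_{j=1}^{M'} d_j/d, with Σ_{j=1}^{M'} d_j/d = 1 exactly when M' = M. -/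
/-- Strengthened form of Theorem 1 (MIVAE paper): if `M > 1` and `M' < M` the
gap `Δs_MIVAE - Δs_VAEAD` is strictly positive; in general
`Σ β^{(j)} ≥ 1 ≥ Σ d_j/d`, with equality `Σ d_j/d = 1` exactly when `M' = M`. -/
theorem mivae_gap_positive_and_bounds
    (M M' N : ℕ) (hM'M : M' ≤ M) (hM' : 1 ≤ M') (hN : 1 ≤ N)
    (δ E : ℝ) (hδ : 0 < δ) (hδE : δ < E)
    (na : Fin M' → ℕ) (hna : ∀ j, 0 < na j)
    (A : ℝ) (hA : A = ∑ j, (na j : ℝ))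
    (C : ℝ) (hC : C = (M : ℝ) * (N : ℝ) * δ / (E - δ))
    (β : Fin M' → ℝ) (hβ : ∀ j, β j = ((M : ℝ) * (na j : ℝ) + C) / (A + C))
    (d : Fin M → ℝ) (hd : ∀ j, 0 < d j)
    (D : ℝ) (hD : D = ∑ j, d j) :
    (1 < M → M' < M →
      (∑ j, β j * (E - δ)) - ∑ j : Fin M', (d (Fin.castLE hM'M j) / D) * (E - δ) > 0)
    ∧ (∑ j, β j ≥ 1)
    ∧ ((1 : ℝ) ≥ ∑ j : Fin M', d (Fin.castLE hM'M j) / D)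
    ∧ ((∑ j : Fin M', d (Fin.castLE hM'M j) / D) = 1 ↔ M' = M) := by
  have hE : (0:ℝ) < E - δ := by linarith
  have hMpos : (0:ℝ) < (M:ℝ) := by
    exact_mod_cast Nat.lt_of_lt_of_le Nat.zero_lt_one (le_trans hM' hM'M)
  have hNpos : (0:ℝ) < (N:ℝ) := by exact_mod_cast hN
  have hApos : 0 < A := by
    rw [hA]
    apply Finset.sum_pos
    · intro j _; exact_mod_cast hna j
    · have : Nonempty (Fin M') := Fin.pos_iff_nonempty.mp (Nat.lt_of_lt_of_le Nat.zero_lt_one hM')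
      exact Finset.univ_nonempty
  have hCpos : 0 < C := by
    rw [hC]; positivity
  have hDpos : 0 < D := by
    rw [hD]
    apply Finset.sum_pos (fun j _ => hd j)
    have : Nonempty (Fin M) := Fin.pos_iff_nonempty.mp
      (Nat.lt_of_lt_of_le Nat.zero_lt_one (le_trans hM' hM'M))
    exact Finset.univ_nonempty
  -- sum of β
  have hβsum : ∑ j, β j = ((M:ℝ) * A + (M':ℝ) * C) / (A + C) := by
    simp only [hβ]
    rw [← Finset.sum_div]
    congr 1
    rw [Finset.sum_add_distrib, ← Finset.mul_sum, ← hA]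
    simp [Finset.card_univ, mul_comm]
  have hβge : ∑ j, β j ≥ 1 := by
    rw [hβsum, ge_iff_le, le_div_iff₀ (by linarith)]
    have h1 : (1:ℝ) ≤ (M:ℝ) := by exact_mod_cast le_trans hM' hM'M
    have h2 : (1:ℝ) ≤ (M':ℝ) := by exact_mod_cast hM'
    nlinarith
  -- partial d sums
  set S : Finset (Fin M) := Finset.univ.map (Fin.castLEEmb hM'M) with hS
  have hmap : ∑ j : Fin M', d (Fin.castLE hM'M j) = ∑ i ∈ S, d i := by
    rw [hS, Finset.sum_map]; rfl
  have hle : ∑ i ∈ S, d i ≤ D := by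
    rw [hD]
    exact Finset.sum_le_sum_of_subset_of_nonneg (Finset.subset_univ S)
      (fun i _ _ => (hd i).le)
  have hlt : M' < M → ∑ i ∈ S, d i < D := by
    intro h
    rw [hD]
    apply Finset.sum_lt_sum_of_subset (Finset.subset_univ S)
      (i := ⟨M', h⟩) (Finset.mem_univ _) _ (hd _) (fun j _ _ => (hd j).le)
    simp only [hS, Finset.mem_map, Finset.mem_univ, true_and, not_exists]
    intro j hj
    have : (Fin.castLEEmb hM'M j : Fin M).val = M' := congrArg Fin.val hj
    have hv : ((Fin.castLEEmb hM'M) j : Fin M).val = j.val := rfl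
    rw [hv] at this
    have := j.isLt
    omega
  have heqiff : ∑ i ∈ S, d i = D ↔ M' = M := by
    constructor
    · intro h
      by_contra hne
      exact absurd h (ne_of_lt (hlt (lt_of_le_of_ne hM'M hne)))
    · intro h
      have hcard : (Finset.univ : Finset (Fin M)).card ≤ S.card := by
        simp [hS, h]
      have hSeq : S = Finset.univ := Finset.eq_of_subset_of_card_le (Finset.subset_univ S) hcard
      rw [hSeq, ← hD]
  have hfrac : ∑ j : Fin M', d (Fin.castLE hM'M j) / D = (∑ i ∈ S, d i) / D := by
    rw [← hmap, Finset.sum_div]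
  have hfracle : ∑ j : Fin M', d (Fin.castLE hM'M j) / D ≤ 1 := by
    rw [hfrac, div_le_one hDpos]; exact hle
  refine ⟨?_, hβge, hfracle, ?_⟩
  · intro _ hM'ltM
    have hfraclt : ∑ j : Fin M', d (Fin.castLE hM'M j) / D < 1 := by
      rw [hfrac, div_lt_one hDpos]; exact hlt hM'ltM
    have : (∑ j, β j) - ∑ j : Fin M', d (Fin.castLE hM'M j) / D > 0 := by linarith
    have hexp : (∑ j, β j * (E - δ)) - ∑ j : Fin M', (d (Fin.castLE hM'M j) / D) * (E - δ)
        = ((∑ j, β j) - ∑ j : Fin M', d (Fin.castLE hM'M j) / D) * (E - δ) := by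
      rw [← Finset.sum_mul, ← Finset.sum_mul, ← sub_mul]
    rw [hexp]
    exact mul_pos this hE
  · rw [hfrac, div_eq_one_iff_eq (ne_of_gt hDpos)]
    exact heqiff
end
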